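/- For every graph G and non-free vertex v, with Q_1 = J_{G_v} and Q_2 = (x_v,y_v) + J_{G\v}, one has Q_1 + Q_2 = (x_v, y_v) + J_{G_v \ v}. -/

import Mathlib

open MvPolynomial

/-- The binomial edge ideal of a graph `G`, in the polynomial ring whose variables
`x_v = X (Sum.inl v)` and `y_v = X (Sum.inr v)` are indexed by two copies of the
vertex set. -/
noncomputable def beIdeal (K : Type) [Field K] {V : Type} (G : SimpleGraph V) :
    Ideal (MvPolynomial (V ⊕ V) K) :=
  Ideal.span { f | ∃ u v, G.Adj u v ∧
    f = X (Sum.inl u) * X (Sum.inr v) - X (Sum.inl v) * X (Sum.inr u) }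

/-- `s` is a maximal clique of `G`. -/
def IsMaxClique {V : Type} (G : SimpleGraph V) (s : Set V) : Prop :=
  G.IsClique s ∧ ∀ t, G.IsClique t → s ⊆ t → s = t

/-- A vertex is free if it belongs to exactly one maximal clique. -/
def IsFreeVertex {V : Type} (G : SimpleGraph V) (v : V) : Prop :=
  ∃! s : Set V, IsMaxClique G s ∧ v ∈ s

/-- The number of maximal cliques of `G`. -/
noncomputable def numMaxCliques {V : Type} (G : SimpleGraph V) : ℕ :=
  Set.ncard { s : Set V | IsMaxClique G s }

/-- `G_v`: the graph `G` with all pairs of neighbours of `v` joined by an edge. -/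
def addNbhd {V : Type} (G : SimpleGraph V) (v : V) : SimpleGraph V where
  Adj u w := u ≠ w ∧ (G.Adj u w ∨ (G.Adj v u ∧ G.Adj v w))
  symm := by
    constructor
    intro u w h
    exact ⟨h.1.symm, by rcases h.2 with h' | h'
                        · exact Or.inl h'.symm
                        · exact Or.inr ⟨h'.2, h'.1⟩⟩
  loopless := by constructor; intro u h; exact h.1 rfl

/-- Deletion of the vertex `v` (keeping `v` as an isolated vertex, so that the
ambient polynomial ring is unchanged). -/
def delVert {V : Type} (G : SimpleGraph V) (v : V) : SimpleGraph V where
  Adj u w := G.Adj u w ∧ u ≠ v ∧ w ≠ v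
  symm := by constructor; intro u w h; exact ⟨h.1.symm, h.2.2, h.2.1⟩
  loopless := by constructor; intro u h; exact G.irrefl h.1

/-! Every generator of `J_G` that involves `v` lies in `(x_v, y_v)`, so
`(x_v, y_v) + J_{G \ v} = (x_v, y_v) + J_G` for every graph. Applied to `G` and to `G_v`,
and using `J_G ⊆ J_{G_v}`, both sides of the identity become `(x_v, y_v) + J_{G_v}`. -/

noncomputable def vertexIdeal (K : Type) [Field K] {V : Type} (v : V) :
    Ideal (MvPolynomial (V ⊕ V) K) :=
  Ideal.span {X (Sum.inl v), X (Sum.inr v)}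

section

variable {K : Type} [Field K] {V : Type}

lemma beIdeal_mono {G H : SimpleGraph V} (h : G ≤ H) : beIdeal K G ≤ beIdeal K H :=
  Ideal.span_mono fun _ ⟨u, w, hadj, hf⟩ => ⟨u, w, h hadj, hf⟩

lemma le_addNbhd (G : SimpleGraph V) (v : V) : G ≤ addNbhd G v :=
  fun _ _ h => ⟨h.ne, Or.inl h⟩

lemma delVert_le (G : SimpleGraph V) (v : V) : delVert G v ≤ G :=
  fun _ _ h => h.1

lemma binomial_mem_vertexIdeal {u w v : V} (h : u = v ∨ w = v) :
    (X (Sum.inl u) * X (Sum.inr w) - X (Sum.inl w) * X (Sum.inr u) :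
      MvPolynomial (V ⊕ V) K) ∈ vertexIdeal K v := by
  have hx : (X (Sum.inl v) : MvPolynomial (V ⊕ V) K) ∈ vertexIdeal K v :=
    Ideal.subset_span (by simp)
  have hy : (X (Sum.inr v) : MvPolynomial (V ⊕ V) K) ∈ vertexIdeal K v :=
    Ideal.subset_span (by simp)
  rcases h with rfl | rfl
  · exact sub_mem (Ideal.mul_mem_right _ _ hx) (Ideal.mul_mem_left _ _ hy)
  · exact sub_mem (Ideal.mul_mem_left _ _ hy) (Ideal.mul_mem_right _ _ hx)

lemma beIdeal_le_vertexIdeal_sup_beIdeal_delVert (G : SimpleGraph V) (v : V) :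
    beIdeal K G ≤ vertexIdeal K v ⊔ beIdeal K (delVert G v) := by
  rw [beIdeal, Ideal.span_le]
  rintro f ⟨u, w, hadj, rfl⟩
  by_cases huw : u = v ∨ w = v
  · exact Ideal.mem_sup_left (binomial_mem_vertexIdeal huw)
  · rw [not_or] at huw
    exact Ideal.mem_sup_right (Ideal.subset_span ⟨u, w, ⟨hadj, huw⟩, rfl⟩)

lemma vertexIdeal_sup_beIdeal_delVert (G : SimpleGraph V) (v : V) :
    vertexIdeal K v ⊔ beIdeal K (delVert G v) = vertexIdeal K v ⊔ beIdeal K G :=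
  le_antisymm (sup_le_sup_left (beIdeal_mono (delVert_le G v)) _)
    (sup_le le_sup_left (beIdeal_le_vertexIdeal_sup_beIdeal_delVert G v))

end

theorem beIdeal_sum_of_not_free_general (K : Type) [Field K] {V : Type}
    (G : SimpleGraph V) (v : V) :
    beIdeal K (addNbhd G v) ⊔
        (Ideal.span {(X (Sum.inl v) : MvPolynomial (V ⊕ V) K), X (Sum.inr v)} ⊔
          beIdeal K (delVert G v)) =
      Ideal.span {(X (Sum.inl v) : MvPolynomial (V ⊕ V) K), X (Sum.inr v)} ⊔
        beIdeal K (delVert (addNbhd G v) v) := by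
  change beIdeal K (addNbhd G v) ⊔ (vertexIdeal K v ⊔ beIdeal K (delVert G v)) =
    vertexIdeal K v ⊔ beIdeal K (delVert (addNbhd G v) v)
  rw [vertexIdeal_sup_beIdeal_delVert, vertexIdeal_sup_beIdeal_delVert, sup_left_comm,
    sup_eq_left.mpr (beIdeal_mono (le_addNbhd G v))]

/-- For a non-free vertex `v` of `G`, with `Q₁ = J_{G_v}` and
`Q₂ = (x_v, y_v) + J_{G \ v}`, one has `Q₁ + Q₂ = (x_v, y_v) + J_{G_v \ v}`. -/
theorem beIdeal_sum_of_not_free (K : Type) [Field K] {V : Type} [Fintype V]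
    (G : SimpleGraph V) (v : V) (hv : ¬ IsFreeVertex G v) :
    beIdeal K (addNbhd G v) ⊔
        (Ideal.span {(X (Sum.inl v) : MvPolynomial (V ⊕ V) K), X (Sum.inr v)} ⊔
          beIdeal K (delVert G v)) =
      Ideal.span {(X (Sum.inl v) : MvPolynomial (V ⊕ V) K), X (Sum.inr v)} ⊔
        beIdeal K (delVert (addNbhd G v) v) :=
  beIdeal_sum_of_not_free_general K G v
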